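/- (Koga's criterion, type D, case (1A)) Let N ≥ 2, u, v ∈ B_sp^+, and let 0 ≤ k ≤ N−2 with k ≡ N (mod 2). Then u ⊗ v lies in the connected component of (+,…,+) ⊗ (+^k, −^{N−k}) in B_sp^+ × B_sp^+ (tensor-product type-D_N operators) if and only if the pair of columns (t(u), t(v)) is k-semistandard and is not (k+2)-semistandard. -/

import Mathlib

namespace CrystalPaper

/-- A sign sequence of length `N`: `true` codes `+`, `false` codes `−`. -/
abbrev Seq (N : ℕ) := Fin N → Bool

/-- The constant sequence `(+,…,+)`. -/
def top (N : ℕ) : Seq N := fun _ => true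

/-- The constant sequence `(−,…,−)`. -/
def bot (N : ℕ) : Seq N := fun _ => false

/-- The sequence `(+^k, −^{N−k})` (first `k` entries `+`, the rest `−`). -/
def lowSeq (N k : ℕ) : Seq N := fun i => decide ((i : ℕ) < k)

/-- The number of `−` entries of a sign sequence. -/
def minusCount (N : ℕ) (b : Seq N) : ℕ :=
  (Finset.univ.filter (fun i => b i = false)).card

/-- `B_sp^+`: sign sequences with an even number of `−` entries. -/
def BspPlus (N : ℕ) (b : Seq N) : Prop := Even (minusCount N b)

/-- `B_sp^−`: sign sequences with an odd number of `−` entries. -/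
def BspMinus (N : ℕ) (b : Seq N) : Prop := Odd (minusCount N b)

/-- The type-`D_N` Kashiwara raising operator `ẽ_l`, labels `1 ≤ l ≤ N`
(`none` codes `0`).  For `1 ≤ l ≤ N−1` it replaces `(b_l, b_{l+1}) = (+,−)` by `(−,+)`;
`ẽ_N` replaces `(b_{N−1}, b_N) = (+,+)` by `(−,−)`. -/
def eD (N l : ℕ) (b : Seq N) : Option (Seq N) :=
  if h : 1 ≤ l ∧ l + 1 ≤ N then
    let i : Fin N := ⟨l - 1, by omega⟩
    let j : Fin N := ⟨l, by omega⟩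
    if b i = true ∧ b j = false then
      some (Function.update (Function.update b i false) j true)
    else none
  else if h2 : l = N ∧ 2 ≤ N then
    let i : Fin N := ⟨N - 2, by omega⟩
    let j : Fin N := ⟨N - 1, by omega⟩
    if b i = true ∧ b j = true then
      some (Function.update (Function.update b i false) j false)
    else none
  else none

/-- The type-`D_N` Kashiwara lowering operator `f̃_l`, labels `1 ≤ l ≤ N`.
For `1 ≤ l ≤ N−1` it replaces `(b_l, b_{l+1}) = (−,+)` by `(+,−)`;
`f̃_N` replaces `(b_{N−1}, b_N) = (−,−)` by `(+,+)`. -/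
def fD (N l : ℕ) (b : Seq N) : Option (Seq N) :=
  if h : 1 ≤ l ∧ l + 1 ≤ N then
    let i : Fin N := ⟨l - 1, by omega⟩
    let j : Fin N := ⟨l, by omega⟩
    if b i = false ∧ b j = true then
      some (Function.update (Function.update b i true) j false)
    else none
  else if h2 : l = N ∧ 2 ≤ N then
    let i : Fin N := ⟨N - 2, by omega⟩
    let j : Fin N := ⟨N - 1, by omega⟩
    if b i = false ∧ b j = false then
      some (Function.update (Function.update b i true) j true)
    else none
  else none

/-- `n`-fold iteration of a partial operator. -/
def iterOp {σ : Type*} (f : σ → Option σ) : ℕ → σ → Option σ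
  | 0, x => some x
  | n + 1, x => (f x).bind (iterOp f n)

/-- `max {n ≥ 0 : f^n x ≠ 0}`, as a supremum in `ℕ`.  Used for the string
lengths `ε_l(x) = max{n : ẽ_l^n x ≠ 0}` and `φ_l(x) = max{n : f̃_l^n x ≠ 0}`. -/
noncomputable def opMax {σ : Type*} (f : σ → Option σ) (x : σ) : ℕ :=
  sSup {n | iterOp f n x ≠ none}

/-- The tensor-product raising operator `ẽ_l` on pairs (lowest-weight convention):
`ẽ_l(x ⊗ y) = x ⊗ ẽ_l y` if `ε_l(x) ≤ φ_l(y)`, and `ẽ_l x ⊗ y` otherwise. -/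
noncomputable def teD (N l : ℕ) (p : Seq N × Seq N) : Option (Seq N × Seq N) :=
  if opMax (eD N l) p.1 ≤ opMax (fD N l) p.2 then (eD N l p.2).map fun y => (p.1, y)
  else (eD N l p.1).map fun x => (x, p.2)

/-- The tensor-product lowering operator `f̃_l` on pairs (lowest-weight convention):
`f̃_l(x ⊗ y) = x ⊗ f̃_l y` if `ε_l(x) < φ_l(y)`, and `f̃_l x ⊗ y` otherwise. -/
noncomputable def tfD (N l : ℕ) (p : Seq N × Seq N) : Option (Seq N × Seq N) :=
  if opMax (eD N l) p.1 < opMax (fD N l) p.2 then (fD N l p.2).map fun y => (p.1, y)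
  else (fD N l p.1).map fun x => (x, p.2)

/-- Connectedness in the tensor product of two type-`D_N` spin crystals:
the equivalence relation generated by single applications of the operators
`ẽ_l`, `f̃_l` with `1 ≤ l ≤ N`. -/
def ConnD (N : ℕ) (p q : Seq N × Seq N) : Prop :=
  Relation.EqvGen (fun p q => ∃ l, 1 ≤ l ∧ l ≤ N ∧ (teD N l p = some q ∨ tfD N l p = some q)) p q

/-- The column `t(b)` encoding a sign sequence `b`:
the increasing list of the letters `{a : b_a = +} ∪ {ā : b_a = −}` of the alphabet
`S = {1,…,N,N̄,…,1̄}`, where the letter `a` is coded by the natural number `a`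
and the barred letter `ā` by `2N+1−a` (so that `N̄,…,1̄` are coded by `N+1,…,2N`). -/
def colList (N : ℕ) (b : Seq N) : List ℕ :=
  Finset.sort
    (Finset.image (fun i : Fin N => if b i then (i : ℕ) + 1 else 2 * N - (i : ℕ)) Finset.univ) (· ≤ ·)

/-- The type-`D` partial order `⪯` on coded letters: the natural order on the codes,
except that `N` and `N̄` (codes `N` and `N+1`) are incomparable. -/
def preceqD (N x y : ℕ) : Prop := x = y ∨ (x < y ∧ ¬(x = N ∧ y = N + 1))

/-- The pair of columns `(a, c)` is `k`-semistandard: `c_r ⪯ a_{N−k+r}` for all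
`1 ≤ r ≤ k` (entries are `1`-based; by convention this is false for `k > N`). -/
def kSemiD (N k : ℕ) (a c : List ℕ) : Prop :=
  k ≤ N ∧ ∀ r, 1 ≤ r → r ≤ k → preceqD N (c.getD (r - 1) 0) (a.getD (N - k + r - 1) 0)

/-! ### Auxiliary development -/

section Aux

open Finset

/-- Number of `−` entries among the first `t` entries. -/
def mcnt (N : ℕ) (b : Seq N) : ℕ → ℕ
  | 0 => 0
  | t + 1 => mcnt N b t + (if h : t < N then (if b ⟨t, h⟩ then 0 else 1) else 0)

lemma mcnt_le_succ (N : ℕ) (b : Seq N) (t : ℕ) :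
    mcnt N b t ≤ mcnt N b (t+1) ∧ mcnt N b (t+1) ≤ mcnt N b t + 1 := by
  simp only [mcnt]; split <;> [skip; omega]; split <;> omega

lemma mcnt_eq_card (N : ℕ) (b : Seq N) (t : ℕ) :
    mcnt N b t = (univ.filter (fun i : Fin N => (i:ℕ) < t ∧ b i = false)).card := by
  induction t with
  | zero =>
    rw [mcnt]
    symm
    rw [Finset.card_eq_zero, Finset.filter_eq_empty_iff]
    intro i _
    simp
  | succ t ih =>
    rw [mcnt, ih]
    by_cases h : t < N
    · rw [dif_pos h]
      by_cases hb : b ⟨t, h⟩ = true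
      · rw [if_pos hb, add_zero]
        refine congrArg Finset.card (Finset.filter_congr fun i _ => ?_)
        constructor
        · rintro ⟨h1, h2⟩
          exact ⟨by omega, h2⟩
        · rintro ⟨h1, h2⟩
          by_cases h' : (i:ℕ) < t
          · exact ⟨h', h2⟩
          · exfalso
            have hi : i = ⟨t, h⟩ := Fin.ext (show (i:ℕ) = t by omega)
            rw [hi, hb] at h2
            exact absurd h2 (by simp)
      · have hb' : b ⟨t, h⟩ = false := by revert hb; cases b ⟨t, h⟩ <;> simp
        rw [if_neg hb]
        have hins : (univ.filter fun i : Fin N => (i:ℕ) < t + 1 ∧ b i = false)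
            = insert ⟨t, h⟩ (univ.filter fun i : Fin N => (i:ℕ) < t ∧ b i = false) := by
          ext i
          simp only [Finset.mem_filter, Finset.mem_insert, Finset.mem_univ, true_and]
          constructor
          · rintro ⟨h1, h2⟩
            by_cases h' : (i:ℕ) < t
            · exact Or.inr ⟨h', h2⟩
            · exact Or.inl (Fin.ext (show (i:ℕ) = t by omega))
          · rintro (rfl | ⟨h1, h2⟩)
            · exact ⟨Nat.lt_succ_self t, hb'⟩
            · exact ⟨by omega, h2⟩
        rw [hins, Finset.card_insert_of_notMem (by simp)]
        
    · rw [dif_neg h, add_zero]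
      refine congrArg Finset.card (Finset.filter_congr fun i _ => ?_)
      have hi := i.isLt
      have hN : N ≤ t := Nat.le_of_not_lt h
      constructor <;> rintro ⟨h1, h2⟩ <;> exact ⟨by omega, h2⟩

lemma mcnt_N_eq_minusCount (N : ℕ) (b : Seq N) : mcnt N b N = minusCount N b := by
  rw [mcnt_eq_card, minusCount]
  refine congrArg Finset.card (Finset.filter_congr fun i _ => ?_)
  have hi := i.isLt
  constructor
  · rintro ⟨_, h2⟩; exact h2
  · intro h2; exact ⟨hi, h2⟩

lemma card_filter_lt (N x : ℕ) (hx : x ≤ N) :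
    (univ.filter (fun i : Fin N => (i:ℕ) < x)).card = x := by
  induction x with
  | zero =>
    rw [Finset.card_eq_zero, Finset.filter_eq_empty_iff]
    intro i _
    simp
  | succ x ih =>
    have hx' : x < N := hx
    have hins : (univ.filter fun i : Fin N => (i:ℕ) < x + 1)
        = insert ⟨x, hx'⟩ (univ.filter fun i : Fin N => (i:ℕ) < x) := by
      ext i
      simp only [Finset.mem_filter, Finset.mem_insert, Finset.mem_univ, true_and]
      constructor
      · intro h1
        by_cases h' : (i:ℕ) < x
        · exact Or.inr h'
        · exact Or.inl (Fin.ext (show (i:ℕ) = x by omega))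
      · rintro (rfl | h1)
        · exact Nat.lt_succ_self x
        · exact Nat.lt_succ_of_lt h1
    rw [hins, Finset.card_insert_of_notMem (by simp), ih (by omega)]

/-- `mcnt` of a sequence which is constantly `true` below `t`. -/
lemma mcnt_eq_zero (N : ℕ) (b : Seq N) (t : ℕ) (h : ∀ i : Fin N, (i:ℕ) < t → b i = true) :
    mcnt N b t = 0 := by
  induction t with
  | zero => rfl
  | succ t ih =>
    rw [mcnt, ih (fun i hi => h i (by omega))]
    by_cases ht : t < N
    · rw [dif_pos ht, if_pos (h ⟨t, ht⟩ (by exact Nat.lt_succ_self t))]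
    · rw [dif_neg ht]

lemma mcnt_top (N t : ℕ) : mcnt N (top N) t = 0 :=
  mcnt_eq_zero N _ t (fun _ _ => rfl)

lemma mcnt_lowSeq (N k t : ℕ) (ht : t ≤ N) : mcnt N (lowSeq N k) t = t - min t k := by
  induction t with
  | zero => simp [mcnt]
  | succ t ih =>
    have htN : t < N := ht
    rw [mcnt, ih (by omega), dif_pos htN]
    have hval : (lowSeq N k) ⟨t, htN⟩ = decide (t < k) := rfl
    by_cases hk' : t < k
    · rw [hval, if_pos (by simp [hk'])]
      omega
    · rw [hval, if_neg (by simp [hk'])]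
      omega

/-! #### the `cnt` function: counting column letters `≤ x` -/

def cnt (N : ℕ) (u : Seq N) (x : ℕ) : ℕ :=
  (univ.filter (fun i : Fin N => (if u i then (i:ℕ) + 1 else 2 * N - (i:ℕ)) ≤ x)).card

lemma code_injective (N : ℕ) (u : Seq N) :
    Function.Injective (fun i : Fin N => if u i then (i:ℕ) + 1 else 2 * N - (i:ℕ)) := by
  intro i j hij
  simp only at hij
  have hi := i.isLt
  have hj := j.isLt
  apply Fin.ext
  cases hb1 : u i <;> cases hb2 : u j <;> rw [hb1, hb2] at hij <;> simp only [if_true, if_false, Bool.false_eq_true] at hij <;> omega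

lemma cnt_le (N : ℕ) (u : Seq N) (x : ℕ) : cnt N u x ≤ N := by
  refine le_trans (Finset.card_filter_le univ _) ?_
  simp

lemma cnt_low (N : ℕ) (u : Seq N) (x : ℕ) (hx : x ≤ N) :
    cnt N u x + mcnt N u x = x := by
  have hpt : ∀ i : Fin N, ((if u i then (i:ℕ) + 1 else 2 * N - (i:ℕ)) ≤ x) ↔ ((i:ℕ) < x ∧ u i = true) := by
    intro i
    have hi := i.isLt
    cases hb : u i
    · simp only [if_false, Bool.false_eq_true, hb]
      constructor
      · intro h; omega
      · rintro ⟨_, h⟩; exact absurd h (by simp)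
    · simp only [if_true, hb]
      constructor
      · intro h; exact ⟨by omega, trivial⟩
      · rintro ⟨h, _⟩; omega
  rw [cnt, Finset.filter_congr (fun i _ => hpt i), mcnt_eq_card]
  have hsplit := Finset.card_filter_add_card_filter_not
    (s := univ.filter (fun i : Fin N => (i:ℕ) < x)) (p := fun i : Fin N => u i = true)
  rw [Finset.filter_filter, Finset.filter_filter, card_filter_lt N x hx] at hsplit
  have hneg : (univ.filter fun i : Fin N => (i:ℕ) < x ∧ ¬(u i = true))
      = (univ.filter fun i : Fin N => (i:ℕ) < x ∧ u i = false) := by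
    refine Finset.filter_congr fun i _ => ?_
    constructor
    · rintro ⟨h1, h2⟩; exact ⟨h1, by revert h2; cases u i <;> simp⟩
    · rintro ⟨h1, h2⟩; exact ⟨h1, by rw [h2]; simp⟩
  rw [hneg] at hsplit
  omega

lemma cnt_high (N : ℕ) (u : Seq N) (x : ℕ) (hx : N ≤ x) :
    cnt N u x + mcnt N u (2 * N - x) = N := by
  have hsplit := Finset.card_filter_add_card_filter_not
    (s := (univ : Finset (Fin N)))
    (p := fun i : Fin N => (if u i then (i:ℕ) + 1 else 2 * N - (i:ℕ)) ≤ x)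
  have hneg : (univ.filter fun i : Fin N => ¬((if u i then (i:ℕ) + 1 else 2 * N - (i:ℕ)) ≤ x))
      = (univ.filter fun i : Fin N => (i:ℕ) < 2 * N - x ∧ u i = false) := by
    refine Finset.filter_congr fun i _ => ?_
    have hi := i.isLt
    cases hb : u i
    · simp only [if_false, Bool.false_eq_true]
      constructor
      · intro h; exact ⟨by omega, trivial⟩
      · rintro ⟨h, _⟩; omega
    · simp only [if_true]
      constructor
      · intro h; exact absurd (by omega : (i:ℕ) + 1 ≤ x) h
      · rintro ⟨_, h⟩; exact absurd h (by simp)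
  rw [hneg, ← mcnt_eq_card, Finset.card_univ, Fintype.card_fin] at hsplit
  rw [cnt]
  exact hsplit

end Aux

section Aux2

open Finset

lemma colList_eq_sort (N : ℕ) (u : Seq N) :
    colList N u = Finset.sort
      (Finset.image (fun i : Fin N => if u i then (i : ℕ) + 1 else 2 * N - (i : ℕ)) Finset.univ) (· ≤ ·) := rfl

lemma colList_length (N : ℕ) (u : Seq N) : (colList N u).length = N := by
  rw [colList_eq_sort, Finset.length_sort,
    Finset.card_image_of_injective _ (code_injective N u), Finset.card_univ, Fintype.card_fin]

lemma colList_sorted (N : ℕ) (u : Seq N) : (colList N u).Pairwise (· < ·) :=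
  (Finset.sortedLT_sort _).pairwise

lemma colList_countP (N : ℕ) (u : Seq N) (x : ℕ) :
    (colList N u).countP (fun y => decide (y ≤ x)) = cnt N u x := by
  rw [colList_eq_sort]
  set S := Finset.image (fun i : Fin N => if u i then (i : ℕ) + 1 else 2 * N - (i : ℕ)) Finset.univ with hS
  have hperm : (Finset.sort S (· ≤ ·)).Perm S.toList := Finset.sort_perm_toList (s := S) (r := (· ≤ ·))
  rw [hperm.countP_eq]
  have h1 : ∀ (s : Finset ℕ), s.toList.countP (fun y => decide (y ≤ x)) = (s.filter (fun y => y ≤ x)).card := by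
    intro s
    have hcc := Multiset.coe_countP (fun y => y ≤ x) s.toList
    rw [Finset.coe_toList] at hcc
    rw [← hcc, Multiset.countP_eq_card_filter]
    rfl
  rw [h1, Finset.filter_image,
    Finset.card_image_of_injective _ (code_injective N u)]
  rfl

lemma colList_mem_bounds (N : ℕ) (u : Seq N) (y : ℕ) (hy : y ∈ colList N u) :
    1 ≤ y ∧ y ≤ 2 * N := by
  rw [colList_eq_sort, Finset.mem_sort] at hy
  rw [Finset.mem_image] at hy
  obtain ⟨i, _, rfl⟩ := hy
  have hi := i.isLt
  cases hb : u i <;> simp [hb] <;> omega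

lemma getD_le_iff (x : ℕ) : ∀ (l : List ℕ) (j : ℕ), l.Pairwise (· < ·) → j < l.length →
    ((l.getD j 0 ≤ x) ↔ j < l.countP (fun y => decide (y ≤ x))) := by
  intro l
  induction l with
  | nil => intro j _ h; simp at h
  | cons a t ih =>
    intro j hs hj
    obtain ⟨ha, ht⟩ := List.pairwise_cons.mp hs
    cases j with
    | zero =>
      rw [List.countP_cons]
      by_cases hax : a ≤ x
      · simpa [hax] using Nat.succ_pos _
      · have h0 : t.countP (fun y => decide (y ≤ x)) = 0 := by
          rw [List.countP_eq_zero]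
          intro y hy
          have := ha y hy
          simp only [decide_eq_true_eq]
          omega
        simpa [hax, h0] using hax
    | succ j =>
      have hgd : (a :: t).getD (j+1) 0 = t.getD j 0 := rfl
      rw [hgd, List.countP_cons]
      have hjt : j < t.length := by simpa using hj
      by_cases hax : a ≤ x
      · rw [ih j ht hjt]
        simp [hax]
      · have h0 : t.countP (fun y => decide (y ≤ x)) = 0 := by
          rw [List.countP_eq_zero]
          intro y hy
          have := ha y hy
          simp only [decide_eq_true_eq]
          omega
        have hmem : t.getD j 0 ∈ t := by
          rw [List.getD_eq_getElem?_getD, List.getElem?_eq_getElem hjt]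
          exact List.getElem_mem hjt
        have := ha _ hmem
        simp only [h0, hax]
        constructor
        · intro h; omega
        · intro h
          simp at h

/-- Pointwise entry comparison through counting. -/
lemma colList_getD_le_iff (N : ℕ) (u : Seq N) (j x : ℕ) (hj : j < N) :
    ((colList N u).getD j 0 ≤ x) ↔ j < cnt N u x := by
  rw [getD_le_iff x (colList N u) j (colList_sorted N u) (by rw [colList_length]; exact hj),
    colList_countP]

/-- The semistandardness invariant. -/
def SC (N s : ℕ) (u v : Seq N) : Prop :=
  ∀ t, t ≤ N → mcnt N v t ≤ s + mcnt N u t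

/-- The bridge: `kSemiD` in terms of the counting invariant. -/
lemma bridge (N k : ℕ) (hN : 2 ≤ N) (hk : k ≤ N) (hs : (N - k) % 2 = 0)
    (u v : Seq N) (hu : mcnt N u N % 2 = 0) (hv : mcnt N v N % 2 = 0) :
    kSemiD N k (colList N u) (colList N v) ↔ SC N (N - k) u v := by
  constructor
  · rintro ⟨-, hr⟩
    intro t htN
    have key : cnt N u t ≤ (N - k) + cnt N v t := by
      by_cases hbig : N ≤ (N - k) + cnt N v t
      · exact le_trans (cnt_le N u t) hbig
      · push_neg at hbig
        set r := cnt N v t + 1 with hrdef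
        have hr1 : 1 ≤ r := by omega
        have hrk : r ≤ k := by omega
        have hpre := hr r hr1 hrk
        rcases hpre with heq | ⟨hlt, -⟩
        · -- equal entries
          by_contra hcon
          push_neg at hcon
          have hjlt : N - k + r - 1 < N := by
            have := cnt_le N u t
            omega
          have ha : (colList N u).getD (N - k + r - 1) 0 ≤ t := by
            rw [colList_getD_le_iff N u _ t hjlt]
            omega
          have hc : ¬ ((colList N v).getD (r - 1) 0 ≤ t) := by
            rw [colList_getD_le_iff N v _ t (by omega)]
            omega
          rw [← heq] at ha
          exact hc ha
        · by_contra hcon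
          push_neg at hcon
          have hjlt : N - k + r - 1 < N := by
            have := cnt_le N u t
            omega
          have ha : (colList N u).getD (N - k + r - 1) 0 ≤ t := by
            rw [colList_getD_le_iff N u _ t hjlt]
            omega
          have hc : ¬ ((colList N v).getD (r - 1) 0 ≤ t) := by
            rw [colList_getD_le_iff N v _ t (by omega)]
            omega
          exact hc (le_trans (le_of_lt hlt) ha)
    have h1 := cnt_low N u t htN
    have h2 := cnt_low N v t htN
    omega
  · intro hsc
    refine ⟨hk, ?_⟩
    intro r h1 hrk
    set s := N - k with hsdef
    -- counting inequalities at any point ≤ 2N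
    have hcnt : ∀ x, x ≤ 2 * N → cnt N u x ≤ s + cnt N v x := by
      intro x hx2
      by_cases hxN : x ≤ N
      · have h1' := cnt_low N u x hxN
        have h2' := cnt_low N v x hxN
        have h3' := hsc x hxN
        omega
      · push_neg at hxN
        have h1' := cnt_high N u x (by omega)
        have h2' := cnt_high N v x (by omega)
        have h3' := hsc (2 * N - x) (by omega)
        omega
    have hjlt : N - k + r - 1 < N := by omega
    set y := (colList N u).getD (N - k + r - 1) 0 with hydef
    have hymem : y ∈ colList N u := by
      have hl : N - k + r - 1 < (colList N u).length := by rw [colList_length]; exact hjlt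
      rw [hydef, List.getD_eq_getElem?_getD, List.getElem?_eq_getElem hl]
      exact List.getElem_mem hl
    obtain ⟨hy1, hy2⟩ := colList_mem_bounds N u y hymem
    have hjy : N - k + r - 1 < cnt N u y := by
      rw [← colList_getD_le_iff N u _ y hjlt]
    have hcy : (colList N v).getD (r - 1) 0 ≤ y := by
      rw [colList_getD_le_iff N v _ y (by omega)]
      have := hcnt y hy2
      omega
    rcases lt_or_eq_of_le hcy with hclt | hceq
    · -- strict: need to rule out (N, N+1) exceptional pair
      refine Or.inr ⟨hclt, ?_⟩
      rintro ⟨hcN, hyN1⟩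
      -- derive counting facts
      have hcleN : (colList N v).getD (r - 1) 0 ≤ N := le_of_eq hcN
      have hcgtN : ¬ ((colList N v).getD (r - 1) 0 ≤ N - 1) := by omega
      rw [colList_getD_le_iff N v _ N (by omega)] at hcleN
      rw [colList_getD_le_iff N v _ (N-1) (by omega)] at hcgtN
      have hyle : y ≤ N + 1 := le_of_eq hyN1
      have hygt : ¬ (y ≤ N) := by omega
      rw [hydef, colList_getD_le_iff N u _ (N+1) hjlt] at hyle
      rw [hydef, colList_getD_le_iff N u _ N hjlt] at hygt
      have e1 := cnt_low N v N (le_refl N)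
      have e2 := cnt_low N v (N-1) (by omega)
      have e3 := cnt_low N u N (le_refl N)
      have e4 := cnt_high N u (N+1) (by omega)
      have e5 : 2 * N - (N + 1) = N - 1 := by omega
      rw [e5] at e4
      have s1 := mcnt_le_succ N v (N-1)
      have s2 := mcnt_le_succ N u (N-1)
      have e6 : N - 1 + 1 = N := by omega
      rw [e6] at s1 s2
      omega
    · exact Or.inl hceq

end Aux2

section Aux3

open Finset

lemma mcnt_zero' (N : ℕ) (b : Seq N) : mcnt N b 0 = 0 := rfl

lemma mcnt_succ (N : ℕ) (b : Seq N) (t : ℕ) :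
    mcnt N b (t+1) = mcnt N b t + (if h : t < N then (if b ⟨t, h⟩ then 0 else 1) else 0) := rfl

lemma opMax_eq_zero {σ : Type*} (f : σ → Option σ) (x : σ) (h : f x = none) : opMax f x = 0 := by
  have hset : {n | iterOp f n x ≠ none} = {0} := by
    ext n
    cases n with
    | zero => simp [iterOp]
    | succ n => simp [iterOp, h]
  rw [opMax, hset, csSup_singleton]

lemma opMax_eq_one {σ : Type*} (f : σ → Option σ) (x y : σ) (h : f x = some y)
    (h2 : f y = none) : opMax f x = 1 := by
  have hset : {n | iterOp f n x ≠ none} = {0, 1} := by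
    ext n
    match n with
    | 0 => simp [iterOp]
    | 1 => simp [iterOp, h]
    | (n+2) => simp [iterOp, h, h2]
  rw [opMax, hset, csSup_pair]
  simp

lemma fin_ne_of_val_ne {N : ℕ} {i j : Fin N} (h : (i:ℕ) ≠ (j:ℕ)) : i ≠ j :=
  fun he => h (congrArg Fin.val he)

lemma upd2_i {N : ℕ} (b : Seq N) {i j : Fin N} (hij : i ≠ j) (x y : Bool) :
    (Function.update (Function.update b i x) j y) i = x := by
  rw [Function.update_apply, if_neg hij, Function.update_self]

lemma upd2_j {N : ℕ} (b : Seq N) {i j : Fin N} (x y : Bool) :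
    (Function.update (Function.update b i x) j y) j = y := by
  simp

lemma upd2_ne {N : ℕ} (b : Seq N) {i j m : Fin N} (hmi : m ≠ i) (hmj : m ≠ j) (x y : Bool) :
    (Function.update (Function.update b i x) j y) m = b m := by
  rw [Function.update_apply, if_neg hmj, Function.update_apply, if_neg hmi]

/-! #### specifications of the crystal operators -/

lemma eD_spec_lt {N l : ℕ} (h1 : 1 ≤ l) (h2 : l + 1 ≤ N) (b : Seq N) :
    eD N l b = if b ⟨l-1, by omega⟩ = true ∧ b ⟨l, by omega⟩ = false
      then some (Function.update (Function.update b ⟨l-1, by omega⟩ false) ⟨l, by omega⟩ true)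
      else none := by
  rw [eD, dif_pos ⟨h1, h2⟩]

lemma fD_spec_lt {N l : ℕ} (h1 : 1 ≤ l) (h2 : l + 1 ≤ N) (b : Seq N) :
    fD N l b = if b ⟨l-1, by omega⟩ = false ∧ b ⟨l, by omega⟩ = true
      then some (Function.update (Function.update b ⟨l-1, by omega⟩ true) ⟨l, by omega⟩ false)
      else none := by
  rw [fD, dif_pos ⟨h1, h2⟩]

lemma eD_spec_N {N : ℕ} (hN : 2 ≤ N) (b : Seq N) :
    eD N N b = if b ⟨N-2, by omega⟩ = true ∧ b ⟨N-1, by omega⟩ = true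
      then some (Function.update (Function.update b ⟨N-2, by omega⟩ false) ⟨N-1, by omega⟩ false)
      else none := by
  rw [eD, dif_neg (by omega : ¬(1 ≤ N ∧ N + 1 ≤ N)), dif_pos ⟨rfl, hN⟩]

lemma fD_spec_N {N : ℕ} (hN : 2 ≤ N) (b : Seq N) :
    fD N N b = if b ⟨N-2, by omega⟩ = false ∧ b ⟨N-1, by omega⟩ = false
      then some (Function.update (Function.update b ⟨N-2, by omega⟩ true) ⟨N-1, by omega⟩ true)
      else none := by
  rw [fD, dif_neg (by omega : ¬(1 ≤ N ∧ N + 1 ≤ N)), dif_pos ⟨rfl, hN⟩]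

lemma opMax_eD_lt {N l : ℕ} (h1 : 1 ≤ l) (h2 : l + 1 ≤ N) (b : Seq N) :
    opMax (eD N l) b = if b ⟨l-1, by omega⟩ = true ∧ b ⟨l, by omega⟩ = false then 1 else 0 := by
  have hij : (⟨l-1, by omega⟩ : Fin N) ≠ ⟨l, by omega⟩ := fin_ne_of_val_ne (by simp; omega)
  split_ifs with h
  · refine opMax_eq_one _ _ _ (by rw [eD_spec_lt h1 h2, if_pos h]) ?_
    rw [eD_spec_lt h1 h2, if_neg]
    rintro ⟨hc, -⟩
    rw [upd2_i _ hij] at hc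
    exact absurd hc (by simp)
  · exact opMax_eq_zero _ _ (by rw [eD_spec_lt h1 h2, if_neg h])

lemma opMax_fD_lt {N l : ℕ} (h1 : 1 ≤ l) (h2 : l + 1 ≤ N) (b : Seq N) :
    opMax (fD N l) b = if b ⟨l-1, by omega⟩ = false ∧ b ⟨l, by omega⟩ = true then 1 else 0 := by
  have hij : (⟨l-1, by omega⟩ : Fin N) ≠ ⟨l, by omega⟩ := fin_ne_of_val_ne (by simp; omega)
  split_ifs with h
  · refine opMax_eq_one _ _ _ (by rw [fD_spec_lt h1 h2, if_pos h]) ?_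
    rw [fD_spec_lt h1 h2, if_neg]
    rintro ⟨hc, -⟩
    rw [upd2_i _ hij] at hc
    exact absurd hc (by simp)
  · exact opMax_eq_zero _ _ (by rw [fD_spec_lt h1 h2, if_neg h])

lemma opMax_eD_N {N : ℕ} (hN : 2 ≤ N) (b : Seq N) :
    opMax (eD N N) b = if b ⟨N-2, by omega⟩ = true ∧ b ⟨N-1, by omega⟩ = true then 1 else 0 := by
  have hij : (⟨N-2, by omega⟩ : Fin N) ≠ ⟨N-1, by omega⟩ := fin_ne_of_val_ne (by simp; omega)
  split_ifs with h
  · refine opMax_eq_one _ _ _ (by rw [eD_spec_N hN, if_pos h]) ?_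
    rw [eD_spec_N hN, if_neg]
    rintro ⟨hc, -⟩
    rw [upd2_i _ hij] at hc
    exact absurd hc (by simp)
  · exact opMax_eq_zero _ _ (by rw [eD_spec_N hN, if_neg h])

lemma opMax_fD_N {N : ℕ} (hN : 2 ≤ N) (b : Seq N) :
    opMax (fD N N) b = if b ⟨N-2, by omega⟩ = false ∧ b ⟨N-1, by omega⟩ = false then 1 else 0 := by
  have hij : (⟨N-2, by omega⟩ : Fin N) ≠ ⟨N-1, by omega⟩ := fin_ne_of_val_ne (by simp; omega)
  split_ifs with h
  · refine opMax_eq_one _ _ _ (by rw [fD_spec_N hN, if_pos h]) ?_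
    rw [fD_spec_N hN, if_neg]
    rintro ⟨hc, -⟩
    rw [upd2_i _ hij] at hc
    exact absurd hc (by simp)
  · exact opMax_eq_zero _ _ (by rw [fD_spec_N hN, if_neg h])

/-! #### effect of a swap on `mcnt` -/

lemma mcnt_swap {N l : ℕ} (h1 : 1 ≤ l) (h2 : l + 1 ≤ N) (b b' : Seq N)
    (hbi : b ⟨l-1, by omega⟩ = true) (hbj : b ⟨l, by omega⟩ = false)
    (hbi' : b' ⟨l-1, by omega⟩ = false) (hbj' : b' ⟨l, by omega⟩ = true)
    (hother : ∀ m : Fin N, (m:ℕ) ≠ l-1 → (m:ℕ) ≠ l → b' m = b m) :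
    ∀ t, mcnt N b' t = mcnt N b t + (if t = l then 1 else 0) := by
  intro t
  induction t with
  | zero =>
    rw [mcnt_zero', mcnt_zero', if_neg (by omega : (0:ℕ) ≠ l)]
  | succ t ih =>
    rw [mcnt_succ, mcnt_succ, ih]
    by_cases h : t < N
    · rw [dif_pos h, dif_pos h]
      by_cases hA : t = l - 1
      · have hfin : (⟨t, h⟩ : Fin N) = ⟨l-1, by omega⟩ := Fin.ext (by simp [hA])
        rw [hfin, hbi, hbi', if_neg (by omega : t ≠ l), if_pos (by omega : t + 1 = l)]
        simp only [eq_self_iff_true, if_true, Bool.false_eq_true, if_false]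
      · by_cases hB : t = l
        · have hfin : (⟨t, h⟩ : Fin N) = ⟨l, by omega⟩ := Fin.ext (by simp [hB])
          rw [hfin, hbj, hbj', if_pos hB, if_neg (by omega : t + 1 ≠ l)]
          simp only [eq_self_iff_true, if_true, Bool.false_eq_true, if_false]
        · rw [hother ⟨t, h⟩ (by simpa using hA) (by simpa using hB),
            if_neg (hB : ¬ t = l), if_neg (show ¬ (t + 1 = l) by omega)]
          omega
    · rw [dif_neg h, dif_neg h, if_neg (by omega : ¬ t = l), if_neg (by omega : ¬ (t + 1 = l))]

lemma mcnt_swapN {N : ℕ} (hN : 2 ≤ N) (b b' : Seq N)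
    (hbi : b ⟨N-2, by omega⟩ = true) (hbj : b ⟨N-1, by omega⟩ = true)
    (hbi' : b' ⟨N-2, by omega⟩ = false) (hbj' : b' ⟨N-1, by omega⟩ = false)
    (hother : ∀ m : Fin N, (m:ℕ) ≠ N-2 → (m:ℕ) ≠ N-1 → b' m = b m) :
    ∀ t, mcnt N b' t = mcnt N b t + (if t = N-1 then 1 else if N ≤ t then 2 else 0) := by
  intro t
  induction t with
  | zero =>
    rw [mcnt_zero', mcnt_zero', if_neg (by omega : (0:ℕ) ≠ N - 1), if_neg (by omega : ¬ (N ≤ 0))]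
  | succ t ih =>
    rw [mcnt_succ, mcnt_succ, ih]
    by_cases h : t < N
    · rw [dif_pos h, dif_pos h]
      by_cases hA : t = N - 2
      · have hfin : (⟨t, h⟩ : Fin N) = ⟨N-2, by omega⟩ := Fin.ext (by simp [hA])
        rw [hfin, hbi, hbi', if_neg (by omega : t ≠ N - 1), if_neg (by omega : ¬ (N ≤ t)),
          if_pos (by omega : t + 1 = N - 1)]
        simp only [eq_self_iff_true, if_true, Bool.false_eq_true, if_false]
      · by_cases hB : t = N - 1
        · have hfin : (⟨t, h⟩ : Fin N) = ⟨N-1, by omega⟩ := Fin.ext (by simp [hB])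
          rw [hfin, hbj, hbj', if_pos hB, if_neg (by omega : t + 1 ≠ N - 1),
            if_pos (by omega : N ≤ t + 1)]
          simp only [eq_self_iff_true, if_true, Bool.false_eq_true, if_false]
        · rw [hother ⟨t, h⟩ (by simpa using hA) (by simpa using hB),
            if_neg (hB : ¬ t = N - 1), if_neg (by omega : ¬ (N ≤ t)),
            if_neg (by omega : t + 1 ≠ N - 1), if_neg (by omega : ¬ (N ≤ t + 1))]
          omega
    · rw [dif_neg h, dif_neg h, if_neg (by omega : t ≠ N - 1), if_pos (by omega : N ≤ t),
        if_neg (by omega : t + 1 ≠ N - 1), if_pos (by omega : N ≤ t + 1)]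

end Aux3

section Aux4

lemma mcnt_succ_val {N t : ℕ} (h : t < N) (b : Seq N) :
    mcnt N b (t+1) = mcnt N b t + (if b ⟨t, h⟩ = true then 0 else 1) := by
  rw [mcnt_succ, dif_pos h]

lemma SC_fv {N s m : ℕ} (h2 : m + 2 ≤ N) (u v v' : Seq N)
    (hvi : v ⟨m, by omega⟩ = false) (hvj : v ⟨m+1, by omega⟩ = true)
    (hvi' : v' ⟨m, by omega⟩ = true) (hvj' : v' ⟨m+1, by omega⟩ = false)
    (hu : ¬(u ⟨m, by omega⟩ = true ∧ u ⟨m+1, by omega⟩ = false))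
    (hrel : ∀ t, mcnt N v t = mcnt N v' t + (if t = m + 1 then 1 else 0)) :
    SC N s u v ↔ SC N s u v' := by
  constructor
  · intro hsc t ht
    have g1 := hsc t ht
    have g2 := hrel t
    omega
  · intro hsc t ht
    by_cases hl : t = m + 1
    · subst hl
      have hrm1 := hrel (m+1)
      rw [if_pos rfl] at hrm1
      by_cases hub : u ⟨m, by omega⟩ = true
      · have huj : u ⟨m+1, by omega⟩ = true := by
          cases hj : u ⟨m+1, by omega⟩
          · exact absurd ⟨hub, hj⟩ hu
          · rfl
        have e1 : mcnt N v' (m+2) = mcnt N v' (m+1) + 1 := by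
          rw [mcnt_succ_val (by omega), hvj']
          simp
        have e2 : mcnt N u (m+2) = mcnt N u (m+1) := by
          rw [mcnt_succ_val (by omega), huj]
          simp
        have h3 := hsc (m+2) (by omega)
        omega
      · have hub' : u ⟨m, by omega⟩ = false := by
          cases hb : u ⟨m, by omega⟩
          · rfl
          · exact absurd hb hub
        have e1 : mcnt N v' (m+1) = mcnt N v' m := by
          rw [mcnt_succ_val (by omega), hvi']
          simp
        have e2 : mcnt N u (m+1) = mcnt N u m + 1 := by
          rw [mcnt_succ_val (by omega), hub']
          simp
        have h3 := hsc m (by omega)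
        omega
    · have g1 := hsc t ht
      have g2 := hrel t
      rw [if_neg hl] at g2
      omega

lemma SC_fu {N s m : ℕ} (h2 : m + 2 ≤ N) (u u' v : Seq N)
    (hui : u ⟨m, by omega⟩ = false) (huj : u ⟨m+1, by omega⟩ = true)
    (hui' : u' ⟨m, by omega⟩ = true) (huj' : u' ⟨m+1, by omega⟩ = false)
    (hv : ¬(v ⟨m, by omega⟩ = false ∧ v ⟨m+1, by omega⟩ = true))
    (hrel : ∀ t, mcnt N u t = mcnt N u' t + (if t = m + 1 then 1 else 0)) :
    SC N s u v ↔ SC N s u' v := by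
  constructor
  · intro hsc t ht
    by_cases hl : t = m + 1
    · subst hl
      have hrm1 := hrel (m+1)
      rw [if_pos rfl] at hrm1
      by_cases hvb : v ⟨m, by omega⟩ = true
      · have e1 : mcnt N v (m+1) = mcnt N v m := by
          rw [mcnt_succ_val (by omega), hvb]
          simp
        have e2 : mcnt N u (m+1) = mcnt N u m + 1 := by
          rw [mcnt_succ_val (by omega), hui]
          simp
        have h3 := hsc m (by omega)
        omega
      · have hvb' : v ⟨m, by omega⟩ = false := by
          cases hb : v ⟨m, by omega⟩
          · rfl
          · exact absurd hb hvb
        have hvj : v ⟨m+1, by omega⟩ = false := by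
          cases hj : v ⟨m+1, by omega⟩
          · rfl
          · exact absurd ⟨hvb', hj⟩ hv
        have e1 : mcnt N v (m+2) = mcnt N v (m+1) + 1 := by
          rw [mcnt_succ_val (by omega), hvj]
          simp
        have e2 : mcnt N u (m+2) = mcnt N u (m+1) := by
          rw [mcnt_succ_val (by omega), huj]
          simp
        have h3 := hsc (m+2) (by omega)
        omega
    · have g1 := hsc t ht
      have g2 := hrel t
      rw [if_neg hl] at g2
      omega
  · intro hsc t ht
    have g1 := hsc t ht
    have g2 := hrel t
    omega

lemma SC_fvN {N s : ℕ} (hN : 2 ≤ N) (u v v' : Seq N)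
    (hvi : v ⟨N-2, by omega⟩ = false) (hvj : v ⟨N-1, by omega⟩ = false)
    (hvi' : v' ⟨N-2, by omega⟩ = true) (hvj' : v' ⟨N-1, by omega⟩ = true)
    (hu : ¬(u ⟨N-2, by omega⟩ = true ∧ u ⟨N-1, by omega⟩ = true))
    (hrel : ∀ t, mcnt N v t = mcnt N v' t + (if t = N - 1 then 1 else if N ≤ t then 2 else 0))
    (hpu : mcnt N u N % 2 = 0) (hpv : mcnt N v N % 2 = 0) (hps : s % 2 = 0) :
    SC N s u v ↔ SC N s u v' := by
  obtain ⟨a, rfl⟩ : ∃ a, N = a + 2 := ⟨N - 2, by omega⟩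
  have hia : (⟨a + 2 - 2, by omega⟩ : Fin (a+2)) = ⟨a, by omega⟩ := rfl
  have hja : (⟨a + 2 - 1, by omega⟩ : Fin (a+2)) = ⟨a + 1, by omega⟩ := rfl
  rw [hia] at hvi hvi'
  rw [hja] at hvj hvj'
  rw [hia, hja] at hu
  have ev1 : mcnt (a+2) v' (a+1) = mcnt (a+2) v' a := by
    rw [mcnt_succ_val (by omega), hvi']
    simp
  have ev2 : mcnt (a+2) v' (a+2) = mcnt (a+2) v' (a+1) := by
    rw [mcnt_succ_val (by omega), hvj']
    simp
  have hr1 := hrel (a+1)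
  rw [if_pos (by omega : a + 1 = a + 2 - 1)] at hr1
  have hr2 := hrel (a+2)
  rw [if_neg (by omega : ¬ (a + 2 = a + 2 - 1)), if_pos (by omega : a + 2 ≤ a + 2)] at hr2
  constructor
  · intro hsc t ht
    by_cases hl1 : t = a + 1
    · subst hl1
      have g1 := hsc (a+1) (by omega)
      omega
    · by_cases hl2 : t = a + 2
      · subst hl2
        have g1 := hsc (a+2) (by omega)
        omega
      · have g1 := hsc t ht
        have g2 := hrel t
        rw [if_neg (by omega : ¬ (t = a + 2 - 1)), if_neg (by omega : ¬ (a + 2 ≤ t))] at g2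
        omega
  · intro hsc t ht
    have hpv' : mcnt (a+2) v' (a+2) % 2 = 0 := by omega
    by_cases hua : u ⟨a, by omega⟩ = true
    · have hua' : u ⟨a+1, by omega⟩ = false := by
        cases hj : u ⟨a+1, by omega⟩
        · rfl
        · exact absurd ⟨hua, hj⟩ hu
      have eu1 : mcnt (a+2) u (a+1) = mcnt (a+2) u a := by
        rw [mcnt_succ_val (by omega), hua]; simp
      have eu2 : mcnt (a+2) u (a+2) = mcnt (a+2) u (a+1) + 1 := by
        rw [mcnt_succ_val (by omega), hua']; simp
      have g1 := hsc a (by omega)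
      have g2 := hsc (a+1) (by omega)
      have g3 := hsc (a+2) (by omega)
      by_cases hl1 : t = a + 1
      · subst hl1; omega
      · by_cases hl2 : t = a + 2
        · subst hl2; omega
        · have g4 := hsc t ht
          have g5 := hrel t
          rw [if_neg (by omega : ¬ (t = a + 2 - 1)), if_neg (by omega : ¬ (a + 2 ≤ t))] at g5
          omega
    · have hua0 : u ⟨a, by omega⟩ = false := by
        cases hb : u ⟨a, by omega⟩
        · rfl
        · exact absurd hb hua
      have eu1 : mcnt (a+2) u (a+1) = mcnt (a+2) u a + 1 := by
        rw [mcnt_succ_val (by omega), hua0]; simp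
      have eu2a : mcnt (a+2) u (a+2) = mcnt (a+2) u (a+1) + (if u ⟨a+1, by omega⟩ = true then 0 else 1) :=
        mcnt_succ_val (by omega) u
      have g1 := hsc a (by omega)
      have g2 := hsc (a+1) (by omega)
      have g3 := hsc (a+2) (by omega)
      have hsplit : mcnt (a+2) u (a+2) = mcnt (a+2) u (a+1) ∨ mcnt (a+2) u (a+2) = mcnt (a+2) u (a+1) + 1 := by
        rw [eu2a]
        cases u ⟨a+1, by omega⟩ <;> simp
      by_cases hl1 : t = a + 1
      · subst hl1; omega
      · by_cases hl2 : t = a + 2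
        · subst hl2; omega
        · have g4 := hsc t ht
          have g5 := hrel t
          rw [if_neg (by omega : ¬ (t = a + 2 - 1)), if_neg (by omega : ¬ (a + 2 ≤ t))] at g5
          omega

lemma SC_fuN {N s : ℕ} (hN : 2 ≤ N) (u u' v : Seq N)
    (hui : u ⟨N-2, by omega⟩ = false) (huj : u ⟨N-1, by omega⟩ = false)
    (hui' : u' ⟨N-2, by omega⟩ = true) (huj' : u' ⟨N-1, by omega⟩ = true)
    (hv : ¬(v ⟨N-2, by omega⟩ = false ∧ v ⟨N-1, by omega⟩ = false))
    (hrel : ∀ t, mcnt N u t = mcnt N u' t + (if t = N - 1 then 1 else if N ≤ t then 2 else 0))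
    (hpu : mcnt N u N % 2 = 0) (hpv : mcnt N v N % 2 = 0) (hps : s % 2 = 0) :
    SC N s u v ↔ SC N s u' v := by
  obtain ⟨a, rfl⟩ : ∃ a, N = a + 2 := ⟨N - 2, by omega⟩
  have hia : (⟨a + 2 - 2, by omega⟩ : Fin (a+2)) = ⟨a, by omega⟩ := rfl
  have hja : (⟨a + 2 - 1, by omega⟩ : Fin (a+2)) = ⟨a + 1, by omega⟩ := rfl
  rw [hia] at hui hui'
  rw [hja] at huj huj'
  rw [hia, hja] at hv
  have eu1 : mcnt (a+2) u (a+1) = mcnt (a+2) u a + 1 := by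
    rw [mcnt_succ_val (by omega), hui]; simp
  have eu2 : mcnt (a+2) u (a+2) = mcnt (a+2) u (a+1) + 1 := by
    rw [mcnt_succ_val (by omega), huj]; simp
  have hr1 := hrel (a+1)
  rw [if_pos (by omega : a + 1 = a + 2 - 1)] at hr1
  have hr2 := hrel (a+2)
  rw [if_neg (by omega : ¬ (a + 2 = a + 2 - 1)), if_pos (by omega : a + 2 ≤ a + 2)] at hr2
  constructor
  · intro hsc t ht
    by_cases hva : v ⟨a, by omega⟩ = true
    · have ev1 : mcnt (a+2) v (a+1) = mcnt (a+2) v a := by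
        rw [mcnt_succ_val (by omega), hva]; simp
      have ev2a : mcnt (a+2) v (a+2) = mcnt (a+2) v (a+1) + (if v ⟨a+1, by omega⟩ = true then 0 else 1) :=
        mcnt_succ_val (by omega) v
      have hsplit : mcnt (a+2) v (a+2) = mcnt (a+2) v (a+1) ∨ mcnt (a+2) v (a+2) = mcnt (a+2) v (a+1) + 1 := by
        rw [ev2a]
        cases v ⟨a+1, by omega⟩ <;> simp
      have g1 := hsc a (by omega)
      have g2 := hsc (a+1) (by omega)
      have g3 := hsc (a+2) (by omega)
      by_cases hl1 : t = a + 1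
      · subst hl1; omega
      · by_cases hl2 : t = a + 2
        · subst hl2; omega
        · have g4 := hsc t ht
          have g5 := hrel t
          rw [if_neg (by omega : ¬ (t = a + 2 - 1)), if_neg (by omega : ¬ (a + 2 ≤ t))] at g5
          omega
    · have hva0 : v ⟨a, by omega⟩ = false := by
        cases hb : v ⟨a, by omega⟩
        · rfl
        · exact absurd hb hva
      have hvj : v ⟨a+1, by omega⟩ = true := by
        cases hj : v ⟨a+1, by omega⟩
        · exact absurd ⟨hva0, hj⟩ hv
        · rfl
      have ev1 : mcnt (a+2) v (a+1) = mcnt (a+2) v a + 1 := by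
        rw [mcnt_succ_val (by omega), hva0]; simp
      have ev2 : mcnt (a+2) v (a+2) = mcnt (a+2) v (a+1) := by
        rw [mcnt_succ_val (by omega), hvj]; simp
      have g1 := hsc a (by omega)
      have g2 := hsc (a+1) (by omega)
      have g3 := hsc (a+2) (by omega)
      by_cases hl1 : t = a + 1
      · subst hl1; omega
      · by_cases hl2 : t = a + 2
        · subst hl2; omega
        · have g4 := hsc t ht
          have g5 := hrel t
          rw [if_neg (by omega : ¬ (t = a + 2 - 1)), if_neg (by omega : ¬ (a + 2 ≤ t))] at g5
          omega
  · intro hsc t ht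
    have g1 := hsc t ht
    have g2 := hrel t
    omega

end Aux4

section Aux5

open Finset

def PkgFv (N : ℕ) (p q : Seq N × Seq N) : Prop :=
  ∃ m, ∃ _h : m + 2 ≤ N,
    q.1 = p.1 ∧
    p.2 ⟨m, by omega⟩ = false ∧ p.2 ⟨m+1, by omega⟩ = true ∧
    q.2 ⟨m, by omega⟩ = true ∧ q.2 ⟨m+1, by omega⟩ = false ∧
    ¬(p.1 ⟨m, by omega⟩ = true ∧ p.1 ⟨m+1, by omega⟩ = false) ∧
    (∀ t, mcnt N p.2 t = mcnt N q.2 t + (if t = m + 1 then 1 else 0))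

def PkgFu (N : ℕ) (p q : Seq N × Seq N) : Prop :=
  ∃ m, ∃ _h : m + 2 ≤ N,
    q.2 = p.2 ∧
    p.1 ⟨m, by omega⟩ = false ∧ p.1 ⟨m+1, by omega⟩ = true ∧
    q.1 ⟨m, by omega⟩ = true ∧ q.1 ⟨m+1, by omega⟩ = false ∧
    ¬(p.2 ⟨m, by omega⟩ = false ∧ p.2 ⟨m+1, by omega⟩ = true) ∧
    (∀ t, mcnt N p.1 t = mcnt N q.1 t + (if t = m + 1 then 1 else 0))

def PkgFvN (N : ℕ) (p q : Seq N × Seq N) : Prop :=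
  ∃ _h : 2 ≤ N,
    q.1 = p.1 ∧
    p.2 ⟨N-2, by omega⟩ = false ∧ p.2 ⟨N-1, by omega⟩ = false ∧
    q.2 ⟨N-2, by omega⟩ = true ∧ q.2 ⟨N-1, by omega⟩ = true ∧
    ¬(p.1 ⟨N-2, by omega⟩ = true ∧ p.1 ⟨N-1, by omega⟩ = true) ∧
    (∀ t, mcnt N p.2 t = mcnt N q.2 t + (if t = N - 1 then 1 else if N ≤ t then 2 else 0))

def PkgFuN (N : ℕ) (p q : Seq N × Seq N) : Prop :=
  ∃ _h : 2 ≤ N,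
    q.2 = p.2 ∧
    p.1 ⟨N-2, by omega⟩ = false ∧ p.1 ⟨N-1, by omega⟩ = false ∧
    q.1 ⟨N-2, by omega⟩ = true ∧ q.1 ⟨N-1, by omega⟩ = true ∧
    ¬(p.2 ⟨N-2, by omega⟩ = false ∧ p.2 ⟨N-1, by omega⟩ = false) ∧
    (∀ t, mcnt N p.1 t = mcnt N q.1 t + (if t = N - 1 then 1 else if N ≤ t then 2 else 0))

def EdgePkg (N : ℕ) (p q : Seq N × Seq N) : Prop :=
  PkgFv N p q ∨ PkgFu N p q ∨ PkgFvN N p q ∨ PkgFuN N p q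

lemma pkg_SC {N : ℕ} {p q : Seq N × Seq N} (h : EdgePkg N p q) (s : ℕ)
    (hpu : mcnt N p.1 N % 2 = 0) (hpv : mcnt N p.2 N % 2 = 0) (hps : s % 2 = 0) :
    SC N s p.1 p.2 ↔ SC N s q.1 q.2 := by
  rcases h with ⟨m, hm, hq1, a1, a2, a3, a4, a5, hrel⟩ | ⟨m, hm, hq2, a1, a2, a3, a4, a5, hrel⟩ |
    ⟨hN, hq1, a1, a2, a3, a4, a5, hrel⟩ | ⟨hN, hq2, a1, a2, a3, a4, a5, hrel⟩
  · rw [hq1]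
    exact SC_fv hm p.1 p.2 q.2 a1 a2 a3 a4 a5 hrel
  · rw [hq2]
    exact SC_fu hm p.1 q.1 p.2 a1 a2 a3 a4 a5 hrel
  · rw [hq1]
    exact SC_fvN hN p.1 p.2 q.2 a1 a2 a3 a4 a5 hrel hpu hpv hps
  · rw [hq2]
    exact SC_fuN hN p.1 q.1 p.2 a1 a2 a3 a4 a5 hrel hpu hpv hps

lemma pkg_parity {N : ℕ} {p q : Seq N × Seq N} (h : EdgePkg N p q) :
    mcnt N q.1 N % 2 = mcnt N p.1 N % 2 ∧ mcnt N q.2 N % 2 = mcnt N p.2 N % 2 := by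
  rcases h with ⟨m, hm, hq1, _, _, _, _, _, hrel⟩ | ⟨m, hm, hq2, _, _, _, _, _, hrel⟩ |
    ⟨hN, hq1, _, _, _, _, _, hrel⟩ | ⟨hN, hq2, _, _, _, _, _, hrel⟩
  · have hr := hrel N
    rw [hq1]
    refine ⟨rfl, ?_⟩
    rw [if_neg (by omega : ¬ (N = m + 1))] at hr
    omega
  · have hr := hrel N
    rw [hq2]
    refine ⟨?_, rfl⟩
    rw [if_neg (by omega : ¬ (N = m + 1))] at hr
    omega
  · have hr := hrel N
    rw [hq1]
    refine ⟨rfl, ?_⟩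
    rw [if_neg (by omega : ¬ (N = N - 1)), if_pos (le_refl N)] at hr
    omega
  · have hr := hrel N
    rw [hq2]
    refine ⟨?_, rfl⟩
    rw [if_neg (by omega : ¬ (N = N - 1)), if_pos (le_refl N)] at hr
    omega

def Meas (N : ℕ) (b : Seq N) : ℕ := ∑ t ∈ Finset.range (N+1), mcnt N b t

lemma meas_lt_of_rel {N : ℕ} (b b' : Seq N) (c : ℕ → ℕ) (j : ℕ) (hj : j ≤ N)
    (hrel : ∀ t, mcnt N b t = mcnt N b' t + c t) (hc : 1 ≤ c j) :
    Meas N b' < Meas N b := by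
  have hsum : Meas N b = Meas N b' + ∑ t ∈ Finset.range (N+1), c t := by
    rw [Meas, Meas, ← Finset.sum_add_distrib]
    exact Finset.sum_congr rfl (fun t _ => hrel t)
  have h1 : 1 ≤ ∑ t ∈ Finset.range (N+1), c t := by
    calc 1 ≤ c j := hc
      _ ≤ _ := Finset.single_le_sum (fun i _ => Nat.zero_le (c i))
          (Finset.mem_range.mpr (by omega))
  omega

lemma pkg_meas {N : ℕ} {p q : Seq N × Seq N} (h : EdgePkg N p q) :
    Meas N q.1 + Meas N q.2 < Meas N p.1 + Meas N p.2 := by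
  rcases h with ⟨m, hm, hq1, _, _, _, _, _, hrel⟩ | ⟨m, hm, hq2, _, _, _, _, _, hrel⟩ |
    ⟨hN, hq1, _, _, _, _, _, hrel⟩ | ⟨hN, hq2, _, _, _, _, _, hrel⟩
  · have := meas_lt_of_rel p.2 q.2 _ (m+1) (by omega) hrel (by rw [if_pos rfl])
    rw [hq1]
    omega
  · have := meas_lt_of_rel p.1 q.1 _ (m+1) (by omega) hrel (by rw [if_pos rfl])
    rw [hq2]
    omega
  · have := meas_lt_of_rel p.2 q.2 _ (N-1) (by omega) hrel (by rw [if_pos rfl])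
    rw [hq1]
    omega
  · have := meas_lt_of_rel p.1 q.1 _ (N-1) (by omega) hrel (by rw [if_pos rfl])
    rw [hq2]
    omega

end Aux5

section Aux6

lemma tfD_edge {N l : ℕ} {p q : Seq N × Seq N} (hN : 2 ≤ N) (h1 : 1 ≤ l) (hlN : l ≤ N)
    (h : tfD N l p = some q) : EdgePkg N p q := by
  rcases Nat.lt_or_ge l N with hlt | hge
  · obtain ⟨m, rfl⟩ : ∃ m, l = m + 1 := ⟨l - 1, by omega⟩
    have h2 : m + 1 + 1 ≤ N := hlt
    have h2' : m + 2 ≤ N := by omega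
    have hij : (⟨m+1-1, by omega⟩ : Fin N) ≠ (⟨m+1, by omega⟩ : Fin N) :=
      fin_ne_of_val_ne (show (m+1-1 : ℕ) ≠ (m+1 : ℕ) by omega)
    rw [tfD, opMax_eD_lt h1 h2, opMax_fD_lt h1 h2] at h
    by_cases hB : (p.2 ⟨m+1-1, by omega⟩ = false ∧ p.2 ⟨m+1, by omega⟩ = true)
    · by_cases hA : (p.1 ⟨m+1-1, by omega⟩ = true ∧ p.1 ⟨m+1, by omega⟩ = false)
      · rw [if_pos hA, if_pos hB, if_neg (lt_irrefl 1)] at h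
        rw [fD_spec_lt h1 h2, if_neg (by rintro ⟨hc, -⟩; rw [hA.1] at hc; simp at hc)] at h
        simp at h
      · rw [if_neg hA, if_pos hB, if_pos (by norm_num)] at h
        rw [fD_spec_lt h1 h2, if_pos hB] at h
        simp only [Option.map_some] at h
        obtain rfl : q = (p.1,
            Function.update (Function.update p.2 ⟨m+1-1, by omega⟩ true) ⟨m+1, by omega⟩ false) :=
          (Option.some.inj h).symm
        refine Or.inl ⟨m, h2', rfl, hB.1, hB.2, upd2_i p.2 hij true false, upd2_j p.2 true false,
          hA, ?_⟩
        exact mcnt_swap h1 h2 _ p.2 (upd2_i p.2 hij true false) (upd2_j p.2 true false)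
          hB.1 hB.2
          (fun m' hm1 hm2 =>
            (upd2_ne p.2 (fin_ne_of_val_ne hm1) (fin_ne_of_val_ne hm2) true false).symm)
    · have hcond : ¬((if p.1 ⟨m+1-1, by omega⟩ = true ∧ p.1 ⟨m+1, by omega⟩ = false then 1 else 0)
          < (if p.2 ⟨m+1-1, by omega⟩ = false ∧ p.2 ⟨m+1, by omega⟩ = true then 1 else 0)) := by
        rw [if_neg hB]
        omega
      rw [if_neg hcond, fD_spec_lt h1 h2] at h
      by_cases hD : (p.1 ⟨m+1-1, by omega⟩ = false ∧ p.1 ⟨m+1, by omega⟩ = true)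
      · rw [if_pos hD] at h
        simp only [Option.map_some] at h
        obtain rfl : q = (Function.update (Function.update p.1 ⟨m+1-1, by omega⟩ true)
            ⟨m+1, by omega⟩ false, p.2) := (Option.some.inj h).symm
        refine Or.inr (Or.inl ⟨m, h2', rfl, hD.1, hD.2, upd2_i p.1 hij true false,
          upd2_j p.1 true false, hB, ?_⟩)
        exact mcnt_swap h1 h2 _ p.1 (upd2_i p.1 hij true false) (upd2_j p.1 true false)
          hD.1 hD.2
          (fun m' hm1 hm2 =>
            (upd2_ne p.1 (fin_ne_of_val_ne hm1) (fin_ne_of_val_ne hm2) true false).symm)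
      · rw [if_neg hD] at h
        simp at h
  · have hlN' : N = l := by omega
    subst hlN'
    have hij : (⟨N-2, by omega⟩ : Fin N) ≠ (⟨N-1, by omega⟩ : Fin N) :=
      fin_ne_of_val_ne (show (N-2 : ℕ) ≠ (N-1 : ℕ) by omega)
    rw [tfD, opMax_eD_N hN, opMax_fD_N hN] at h
    by_cases hB : (p.2 ⟨N-2, by omega⟩ = false ∧ p.2 ⟨N-1, by omega⟩ = false)
    · by_cases hA : (p.1 ⟨N-2, by omega⟩ = true ∧ p.1 ⟨N-1, by omega⟩ = true)
      · rw [if_pos hA, if_pos hB, if_neg (lt_irrefl 1)] at h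
        rw [fD_spec_N hN, if_neg (by rintro ⟨hc, -⟩; rw [hA.1] at hc; simp at hc)] at h
        simp at h
      · rw [if_neg hA, if_pos hB, if_pos (by norm_num)] at h
        rw [fD_spec_N hN, if_pos hB] at h
        simp only [Option.map_some] at h
        obtain rfl : q = (p.1,
            Function.update (Function.update p.2 ⟨N-2, by omega⟩ true) ⟨N-1, by omega⟩ true) :=
          (Option.some.inj h).symm
        refine Or.inr (Or.inr (Or.inl ⟨hN, rfl, hB.1, hB.2, upd2_i p.2 hij true true,
          upd2_j p.2 true true, hA, ?_⟩))
        exact mcnt_swapN hN _ p.2 (upd2_i p.2 hij true true) (upd2_j p.2 true true)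
          hB.1 hB.2
          (fun m' hm1 hm2 =>
            (upd2_ne p.2 (fin_ne_of_val_ne hm1) (fin_ne_of_val_ne hm2) true true).symm)
    · have hcond : ¬((if p.1 ⟨N-2, by omega⟩ = true ∧ p.1 ⟨N-1, by omega⟩ = true then 1 else 0)
          < (if p.2 ⟨N-2, by omega⟩ = false ∧ p.2 ⟨N-1, by omega⟩ = false then 1 else 0)) := by
        rw [if_neg hB]
        omega
      rw [if_neg hcond, fD_spec_N hN] at h
      by_cases hD : (p.1 ⟨N-2, by omega⟩ = false ∧ p.1 ⟨N-1, by omega⟩ = false)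
      · rw [if_pos hD] at h
        simp only [Option.map_some] at h
        obtain rfl : q = (Function.update (Function.update p.1 ⟨N-2, by omega⟩ true)
            ⟨N-1, by omega⟩ true, p.2) := (Option.some.inj h).symm
        refine Or.inr (Or.inr (Or.inr ⟨hN, rfl, hD.1, hD.2, upd2_i p.1 hij true true,
          upd2_j p.1 true true, hB, ?_⟩))
        exact mcnt_swapN hN _ p.1 (upd2_i p.1 hij true true) (upd2_j p.1 true true)
          hD.1 hD.2
          (fun m' hm1 hm2 =>
            (upd2_ne p.1 (fin_ne_of_val_ne hm1) (fin_ne_of_val_ne hm2) true true).symm)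
      · rw [if_neg hD] at h
        simp at h

lemma teD_edge {N l : ℕ} {p q : Seq N × Seq N} (hN : 2 ≤ N) (h1 : 1 ≤ l) (hlN : l ≤ N)
    (h : teD N l p = some q) : EdgePkg N q p := by
  rcases Nat.lt_or_ge l N with hlt | hge
  · obtain ⟨m, rfl⟩ : ∃ m, l = m + 1 := ⟨l - 1, by omega⟩
    have h2 : m + 1 + 1 ≤ N := hlt
    have h2' : m + 2 ≤ N := by omega
    have hij : (⟨m+1-1, by omega⟩ : Fin N) ≠ (⟨m+1, by omega⟩ : Fin N) :=
      fin_ne_of_val_ne (show (m+1-1 : ℕ) ≠ (m+1 : ℕ) by omega)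
    rw [teD, opMax_eD_lt h1 h2, opMax_fD_lt h1 h2] at h
    by_cases hA : (p.1 ⟨m+1-1, by omega⟩ = true ∧ p.1 ⟨m+1, by omega⟩ = false)
    · by_cases hB : (p.2 ⟨m+1-1, by omega⟩ = false ∧ p.2 ⟨m+1, by omega⟩ = true)
      · rw [if_pos hA, if_pos hB, if_pos (le_refl 1)] at h
        rw [eD_spec_lt h1 h2, if_neg (by rintro ⟨hc, -⟩; rw [hB.1] at hc; simp at hc)] at h
        simp at h
      · rw [if_pos hA, if_neg hB, if_neg (by norm_num)] at h
        rw [eD_spec_lt h1 h2, if_pos hA] at h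
        simp only [Option.map_some] at h
        obtain rfl : q = (Function.update (Function.update p.1 ⟨m+1-1, by omega⟩ false)
            ⟨m+1, by omega⟩ true, p.2) := (Option.some.inj h).symm
        refine Or.inr (Or.inl ⟨m, h2', rfl, upd2_i p.1 hij false true, upd2_j p.1 false true,
          hA.1, hA.2, hB, ?_⟩)
        exact mcnt_swap h1 h2 p.1 _ hA.1 hA.2 (upd2_i p.1 hij false true)
          (upd2_j p.1 false true)
          (fun m' hm1 hm2 =>
            upd2_ne p.1 (fin_ne_of_val_ne hm1) (fin_ne_of_val_ne hm2) false true)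
    · rw [if_neg hA] at h
      rw [if_pos (Nat.zero_le _)] at h
      rw [eD_spec_lt h1 h2] at h
      by_cases hC : (p.2 ⟨m+1-1, by omega⟩ = true ∧ p.2 ⟨m+1, by omega⟩ = false)
      · rw [if_pos hC] at h
        simp only [Option.map_some] at h
        obtain rfl : q = (p.1, Function.update (Function.update p.2 ⟨m+1-1, by omega⟩ false)
            ⟨m+1, by omega⟩ true) := (Option.some.inj h).symm
        refine Or.inl ⟨m, h2', rfl, upd2_i p.2 hij false true, upd2_j p.2 false true,
          hC.1, hC.2, hA, ?_⟩
        exact mcnt_swap h1 h2 p.2 _ hC.1 hC.2 (upd2_i p.2 hij false true)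
          (upd2_j p.2 false true)
          (fun m' hm1 hm2 =>
            upd2_ne p.2 (fin_ne_of_val_ne hm1) (fin_ne_of_val_ne hm2) false true)
      · rw [if_neg hC] at h
        simp at h
  · have hlN' : N = l := by omega
    subst hlN'
    have hij : (⟨N-2, by omega⟩ : Fin N) ≠ (⟨N-1, by omega⟩ : Fin N) :=
      fin_ne_of_val_ne (show (N-2 : ℕ) ≠ (N-1 : ℕ) by omega)
    rw [teD, opMax_eD_N hN, opMax_fD_N hN] at h
    by_cases hA : (p.1 ⟨N-2, by omega⟩ = true ∧ p.1 ⟨N-1, by omega⟩ = true)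
    · by_cases hB : (p.2 ⟨N-2, by omega⟩ = false ∧ p.2 ⟨N-1, by omega⟩ = false)
      · rw [if_pos hA, if_pos hB, if_pos (le_refl 1)] at h
        rw [eD_spec_N hN, if_neg (by rintro ⟨hc, -⟩; rw [hB.1] at hc; simp at hc)] at h
        simp at h
      · rw [if_pos hA, if_neg hB, if_neg (by norm_num)] at h
        rw [eD_spec_N hN, if_pos hA] at h
        simp only [Option.map_some] at h
        obtain rfl : q = (Function.update (Function.update p.1 ⟨N-2, by omega⟩ false)
            ⟨N-1, by omega⟩ false, p.2) := (Option.some.inj h).symm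
        refine Or.inr (Or.inr (Or.inr ⟨hN, rfl, upd2_i p.1 hij false false,
          upd2_j p.1 false false, hA.1, hA.2, hB, ?_⟩))
        exact mcnt_swapN hN p.1 _ hA.1 hA.2 (upd2_i p.1 hij false false)
          (upd2_j p.1 false false)
          (fun m' hm1 hm2 =>
            upd2_ne p.1 (fin_ne_of_val_ne hm1) (fin_ne_of_val_ne hm2) false false)
    · rw [if_neg hA, if_pos (Nat.zero_le _)] at h
      rw [eD_spec_N hN] at h
      by_cases hC : (p.2 ⟨N-2, by omega⟩ = true ∧ p.2 ⟨N-1, by omega⟩ = true)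
      · rw [if_pos hC] at h
        simp only [Option.map_some] at h
        obtain rfl : q = (p.1, Function.update (Function.update p.2 ⟨N-2, by omega⟩ false)
            ⟨N-1, by omega⟩ false) := (Option.some.inj h).symm
        refine Or.inr (Or.inr (Or.inl ⟨hN, rfl, upd2_i p.2 hij false false,
          upd2_j p.2 false false, hC.1, hC.2, hA, ?_⟩))
        exact mcnt_swapN hN p.2 _ hC.1 hC.2 (upd2_i p.2 hij false false)
          (upd2_j p.2 false false)
          (fun m' hm1 hm2 =>
            upd2_ne p.2 (fin_ne_of_val_ne hm1) (fin_ne_of_val_ne hm2) false false)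
      · rw [if_neg hC] at h
        simp at h

end Aux6

section Aux7

lemma edgeRel_pkg {N : ℕ} (hN : 2 ≤ N) {p q : Seq N × Seq N}
    (h : ∃ l, 1 ≤ l ∧ l ≤ N ∧ (teD N l p = some q ∨ tfD N l p = some q)) :
    EdgePkg N p q ∨ EdgePkg N q p := by
  obtain ⟨l, h1, h2, h3 | h3⟩ := h
  · exact Or.inr (teD_edge hN h1 h2 h3)
  · exact Or.inl (tfD_edge hN h1 h2 h3)

lemma conn_invariant {N : ℕ} (hN : 2 ≤ N) {p q : Seq N × Seq N} (h : ConnD N p q) :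
    (mcnt N p.1 N % 2 = mcnt N q.1 N % 2 ∧ mcnt N p.2 N % 2 = mcnt N q.2 N % 2) ∧
    (∀ s, s % 2 = 0 → mcnt N p.1 N % 2 = 0 → mcnt N p.2 N % 2 = 0 →
      (SC N s p.1 p.2 ↔ SC N s q.1 q.2)) := by
  induction h with
  | rel x y hxy =>
    rcases edgeRel_pkg hN hxy with hp | hp
    · have hpar := pkg_parity hp
      exact ⟨⟨hpar.1.symm, hpar.2.symm⟩, fun s hs hh1 hh2 => pkg_SC hp s hh1 hh2 hs⟩
    · have hpar := pkg_parity hp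
      exact ⟨⟨hpar.1, hpar.2⟩, fun s hs hh1 hh2 =>
        (pkg_SC hp s (by omega) (by omega) hs).symm⟩
  | refl x => exact ⟨⟨rfl, rfl⟩, fun _ _ _ _ => Iff.rfl⟩
  | symm x y hxy ih =>
    obtain ⟨⟨i1, i2⟩, isc⟩ := ih
    exact ⟨⟨i1.symm, i2.symm⟩, fun s hs hh1 hh2 =>
      (isc s hs (by omega) (by omega)).symm⟩
  | trans x y z hxy hyz ih1 ih2 =>
    obtain ⟨⟨i1, i2⟩, isc1⟩ := ih1
    obtain ⟨⟨j1, j2⟩, isc2⟩ := ih2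
    exact ⟨⟨i1.trans j1, i2.trans j2⟩, fun s hs hh1 hh2 =>
      (isc1 s hs hh1 hh2).trans (isc2 s hs (by omega) (by omega))⟩

def Dead (N : ℕ) (p : Seq N × Seq N) : Prop := ∀ l, 1 ≤ l → l ≤ N → tfD N l p = none

lemma reach_dead_aux {N : ℕ} (hN : 2 ≤ N) :
    ∀ n (p : Seq N × Seq N), Meas N p.1 + Meas N p.2 ≤ n →
      ∃ q, ConnD N p q ∧ Dead N q := by
  intro n
  induction n with
  | zero =>
    intro p hp
    by_cases hd : Dead N p
    · exact ⟨p, Relation.EqvGen.refl p, hd⟩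
    · exfalso
      unfold Dead at hd
      push_neg at hd
      obtain ⟨l, h1, h2, h3⟩ := hd
      obtain ⟨q', hq'⟩ := Option.ne_none_iff_exists'.mp h3
      have hm := pkg_meas (tfD_edge hN h1 h2 hq')
      omega
  | succ n ih =>
    intro p hp
    by_cases hd : Dead N p
    · exact ⟨p, Relation.EqvGen.refl p, hd⟩
    · unfold Dead at hd
      push_neg at hd
      obtain ⟨l, h1, h2, h3⟩ := hd
      obtain ⟨q', hq'⟩ := Option.ne_none_iff_exists'.mp h3
      have hm := pkg_meas (tfD_edge hN h1 h2 hq')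
      obtain ⟨q, hconn, hdead⟩ := ih q' (by omega)
      exact ⟨q, Relation.EqvGen.trans _ _ _
        (Relation.EqvGen.rel _ _ ⟨l, h1, h2, Or.inr hq'⟩) hconn, hdead⟩

lemma reach_dead {N : ℕ} (hN : 2 ≤ N) (p : Seq N × Seq N) :
    ∃ q, ConnD N p q ∧ Dead N q :=
  reach_dead_aux hN (Meas N p.1 + Meas N p.2) p (le_refl _)

/-! #### configurations where `tfD` is defined -/

lemma tfD_some_of_u {N m : ℕ} (h2 : m + 2 ≤ N) (p : Seq N × Seq N)
    (hu1 : p.1 ⟨m, by omega⟩ = false) (hu2 : p.1 ⟨m+1, by omega⟩ = true) :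
    tfD N (m+1) p ≠ none := by
  have h1 : 1 ≤ m + 1 := by omega
  have h2' : m + 1 + 1 ≤ N := by omega
  rw [tfD, opMax_eD_lt h1 h2', opMax_fD_lt h1 h2']
  have hA : ¬(p.1 ⟨m+1-1, by omega⟩ = true ∧ p.1 ⟨m+1, by omega⟩ = false) := by
    rintro ⟨hc, -⟩
    exact absurd (hu1.symm.trans hc) (by simp)
  rw [if_neg hA]
  by_cases hB : (p.2 ⟨m+1-1, by omega⟩ = false ∧ p.2 ⟨m+1, by omega⟩ = true)
  · rw [if_pos hB, if_pos (by norm_num), fD_spec_lt h1 h2', if_pos hB]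
    simp
  · rw [if_neg hB, if_neg (by norm_num), fD_spec_lt h1 h2', if_pos ⟨hu1, hu2⟩]
    simp

lemma tfD_some_of_v {N m : ℕ} (h2 : m + 2 ≤ N) (p : Seq N × Seq N)
    (hv1 : p.2 ⟨m, by omega⟩ = false) (hv2 : p.2 ⟨m+1, by omega⟩ = true)
    (hu : ¬(p.1 ⟨m, by omega⟩ = true ∧ p.1 ⟨m+1, by omega⟩ = false)) :
    tfD N (m+1) p ≠ none := by
  have h1 : 1 ≤ m + 1 := by omega
  have h2' : m + 1 + 1 ≤ N := by omega
  have hu' : ¬(p.1 ⟨m+1-1, by omega⟩ = true ∧ p.1 ⟨m+1, by omega⟩ = false) := hu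
  have hv1' : p.2 ⟨m+1-1, by omega⟩ = false := hv1
  rw [tfD, opMax_eD_lt h1 h2', opMax_fD_lt h1 h2', if_neg hu']
  have hcond : (0:ℕ) < (if p.2 ⟨m+1-1, by omega⟩ = false ∧ p.2 ⟨m+1, by omega⟩ = true
      then 1 else 0) := by
    rw [if_pos ⟨hv1', hv2⟩]
    norm_num
  rw [if_pos hcond, fD_spec_lt h1 h2', if_pos ⟨hv1', hv2⟩]
  simp

lemma tfD_some_of_uN {N : ℕ} (hN : 2 ≤ N) (p : Seq N × Seq N)
    (hu1 : p.1 ⟨N-2, by omega⟩ = false) (hu2 : p.1 ⟨N-1, by omega⟩ = false) :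
    tfD N N p ≠ none := by
  rw [tfD, opMax_eD_N hN, opMax_fD_N hN]
  have hA : ¬(p.1 ⟨N-2, by omega⟩ = true ∧ p.1 ⟨N-1, by omega⟩ = true) := by
    rintro ⟨hc, -⟩
    exact absurd (hu1.symm.trans hc) (by simp)
  rw [if_neg hA]
  by_cases hB : (p.2 ⟨N-2, by omega⟩ = false ∧ p.2 ⟨N-1, by omega⟩ = false)
  · rw [if_pos hB, if_pos (by norm_num), fD_spec_N hN, if_pos hB]
    simp
  · rw [if_neg hB, if_neg (by norm_num), fD_spec_N hN, if_pos ⟨hu1, hu2⟩]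
    simp

lemma tfD_some_of_vN {N : ℕ} (hN : 2 ≤ N) (p : Seq N × Seq N)
    (hv1 : p.2 ⟨N-2, by omega⟩ = false) (hv2 : p.2 ⟨N-1, by omega⟩ = false)
    (hu : ¬(p.1 ⟨N-2, by omega⟩ = true ∧ p.1 ⟨N-1, by omega⟩ = true)) :
    tfD N N p ≠ none := by
  rw [tfD, opMax_eD_N hN, opMax_fD_N hN, if_neg hu]
  have hcond : (0:ℕ) < (if p.2 ⟨N-2, by omega⟩ = false ∧ p.2 ⟨N-1, by omega⟩ = false
      then 1 else 0) := by
    rw [if_pos ⟨hv1, hv2⟩]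
    norm_num
  rw [if_pos hcond, fD_spec_N hN, if_pos ⟨hv1, hv2⟩]
  simp

/-- falses propagate to the right for a sequence with no `(−,+)` pattern -/
lemma prop_false {N : ℕ} (b : Seq N)
    (hno : ∀ m (_hm : m + 2 ≤ N), ¬(b ⟨m, by omega⟩ = false ∧ b ⟨m+1, by omega⟩ = true)) :
    ∀ (d i : ℕ) (h : i + d < N), b ⟨i, by omega⟩ = false → b ⟨i + d, by omega⟩ = false := by
  intro d
  induction d with
  | zero => intro i h hf; exact hf
  | succ d ih =>
    intro i h hf
    have hprev : b ⟨i + d, by omega⟩ = false := ih i (by omega) hf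
    cases hnext : b ⟨i + d + 1, by omega⟩
    · simpa [Nat.add_assoc] using hnext
    · exact absurd ⟨hprev, hnext⟩ (hno (i + d) (by omega))

lemma dead_classify {N : ℕ} (hN : 2 ≤ N) (p : Seq N × Seq N) (hd : Dead N p)
    (hpu : mcnt N p.1 N % 2 = 0) :
    ∃ k', k' ≤ N ∧ p.1 = top N ∧ p.2 = lowSeq N k' := by
  classical
  -- no (−,+) pattern in u
  have hu_noFT : ∀ m (_hm : m + 2 ≤ N), ¬(p.1 ⟨m, by omega⟩ = false ∧ p.1 ⟨m+1, by omega⟩ = true) := by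
    rintro m hm ⟨ha, hb⟩
    exact tfD_some_of_u hm p ha hb (hd (m+1) (by omega) (by omega))
  -- all entries of u below N-1 are true
  have hu_lt : ∀ j : Fin N, (j:ℕ) + 2 ≤ N → p.1 j = true := by
    intro j hj
    by_contra hc
    have hfj : p.1 j = false := by
      cases hv : p.1 j
      · rfl
      · exact absurd hv hc
    have hfj' : p.1 ⟨(j:ℕ), j.isLt⟩ = false := hfj
    have hf1 : p.1 ⟨N-2, by omega⟩ = false := by
      have hh := prop_false p.1 hu_noFT (N-2-(j:ℕ)) (j:ℕ) (by omega) hfj'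
      have hee : (⟨(j:ℕ) + (N-2-(j:ℕ)), by omega⟩ : Fin N) = ⟨N-2, by omega⟩ :=
        Fin.ext (show (j:ℕ) + (N-2-(j:ℕ)) = N-2 by omega)
      rwa [hee] at hh
    have hf2 : p.1 ⟨N-1, by omega⟩ = false := by
      have hh := prop_false p.1 hu_noFT (N-1-(j:ℕ)) (j:ℕ) (by omega) hfj'
      have hee : (⟨(j:ℕ) + (N-1-(j:ℕ)), by omega⟩ : Fin N) = ⟨N-1, by omega⟩ :=
        Fin.ext (show (j:ℕ) + (N-1-(j:ℕ)) = N-1 by omega)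
      rwa [hee] at hh
    exact (tfD_some_of_uN hN p hf1 hf2) (hd N (by omega) (le_refl N))
  have hmu0 : mcnt N p.1 (N-1) = 0 :=
    mcnt_eq_zero _ _ _ (fun i hi => hu_lt i (by omega))
  have hlast : p.1 ⟨N-1, by omega⟩ = true := by
    by_contra hc
    have hf : p.1 ⟨N-1, by omega⟩ = false := by
      cases hv : p.1 ⟨N-1, by omega⟩
      · rfl
      · exact absurd hv hc
    have hstep := mcnt_succ_val (show N-1 < N by omega) p.1
    rw [show N - 1 + 1 = N by omega, hmu0, hf] at hstep
    simp at hstep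
    omega
  have hu_top : p.1 = top N := by
    funext j
    by_cases hj : (j:ℕ) + 2 ≤ N
    · exact hu_lt j hj
    · have hje : j = ⟨N-1, by omega⟩ := Fin.ext (show (j:ℕ) = N-1 by have := j.isLt; omega)
      rw [hje]
      exact hlast
  -- now v
  have hv_noFT : ∀ m (_hm : m + 2 ≤ N), ¬(p.2 ⟨m, by omega⟩ = false ∧ p.2 ⟨m+1, by omega⟩ = true) := by
    rintro m hm ⟨ha, hb⟩
    refine tfD_some_of_v hm p ha hb ?_ (hd (m+1) (by omega) (by omega))
    rintro ⟨-, hc⟩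
    rw [hu_top] at hc
    exact absurd hc (by simp [top])
  by_cases hall : ∀ i : Fin N, p.2 i = true
  · refine ⟨N, le_refl N, hu_top, ?_⟩
    funext i
    rw [hall i]
    symm
    simp only [lowSeq, decide_eq_true_eq]
    exact i.isLt
  · push_neg at hall
    obtain ⟨j, hj⟩ := hall
    have hjf : p.2 j = false := by
      cases hv : p.2 j
      · rfl
      · exact absurd hv hj
    have hex : ∃ n, ∃ h : n < N, p.2 ⟨n, h⟩ = false := ⟨(j:ℕ), j.isLt, hjf⟩
    set k' := Nat.find hex with hk'def
    obtain ⟨hk'N, hk'f⟩ := Nat.find_spec hex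
    refine ⟨k', by omega, hu_top, ?_⟩
    funext i
    by_cases hik : (i:ℕ) < k'
    · have hnF := Nat.find_min hex hik
      have ht : p.2 i = true := by
        cases hv : p.2 i
        · exact absurd ⟨i.isLt, hv⟩ hnF
        · rfl
      rw [ht]
      symm
      simp only [lowSeq, decide_eq_true_eq]
      exact hik
    · have hf : p.2 i = false := by
        have hh := prop_false p.2 hv_noFT ((i:ℕ) - k') k' (by have := i.isLt; omega) hk'f
        have hee : (⟨k' + ((i:ℕ) - k'), by have := i.isLt; omega⟩ : Fin N) = i :=
          Fin.ext (show k' + ((i:ℕ) - k') = (i:ℕ) by omega)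
        rwa [hee] at hh
      rw [hf]
      symm
      simp only [lowSeq]
      exact decide_eq_false (by omega)

lemma SC_profile {N k k' : ℕ} (hk : k ≤ N) (hk' : k' ≤ N) :
    SC N (N - k) (top N) (lowSeq N k') ↔ k ≤ k' := by
  constructor
  · intro h
    have hh := h N (le_refl N)
    rw [mcnt_top, mcnt_lowSeq N k' N (le_refl N)] at hh
    omega
  · intro h t ht
    rw [mcnt_top, mcnt_lowSeq N k' t ht]
    omega

end Aux7

/-- Koga's criterion, type `D`, case (1A).  For `N ≥ 2`,
`u, v ∈ B_sp^+` and `0 ≤ k ≤ N−2` with `k ≡ N (mod 2)`, the element `u ⊗ v` lies in the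
connected component of `(+,…,+) ⊗ (+^k, −^{N−k})` iff the pair of columns
`(t(u), t(v))` is `k`-semistandard and not `(k+2)`-semistandard. -/
theorem koga_D_1A (N : ℕ) (hN : 2 ≤ N) (u v : Seq N)
    (hu : BspPlus N u) (hv : BspPlus N v)
    (k : ℕ) (hk : k ≤ N - 2) (hpar : k % 2 = N % 2) :
    ConnD N (u, v) (top N, lowSeq N k) ↔
      (kSemiD N k (colList N u) (colList N v) ∧
        ¬ kSemiD N (k + 2) (colList N u) (colList N v)) := by
  have hk2 : k + 2 ≤ N := by omega
  have hkN : k ≤ N := by omega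
  have hmu : mcnt N u N % 2 = 0 := by
    rw [mcnt_N_eq_minusCount]
    exact Nat.even_iff.mp hu
  have hmv : mcnt N v N % 2 = 0 := by
    rw [mcnt_N_eq_minusCount]
    exact Nat.even_iff.mp hv
  have hsk : (N - k) % 2 = 0 := by omega
  have hsk2 : (N - (k + 2)) % 2 = 0 := by omega
  rw [bridge N k hN hkN hsk u v hmu hmv, bridge N (k+2) hN hk2 hsk2 u v hmu hmv]
  constructor
  · intro hconn
    have hinv := conn_invariant hN hconn
    have htrans := hinv.2
    constructor
    · rw [htrans (N - k) hsk hmu hmv]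
      exact (SC_profile hkN hkN).mpr (le_refl k)
    · rw [htrans (N - (k + 2)) hsk2 hmu hmv]
      intro hc
      have := (SC_profile hk2 hkN).mp hc
      omega
  · rintro ⟨hs1, hs2⟩
    obtain ⟨q, hconn, hdead⟩ := reach_dead hN (u, v)
    have hinv := conn_invariant hN hconn
    have hpe1 : mcnt N (u, v).1 N = mcnt N u N := rfl
    have hpe2 : mcnt N (u, v).2 N = mcnt N v N := rfl
    have hq1 : mcnt N q.1 N % 2 = 0 := by
      have := hinv.1.1
      omega
    obtain ⟨k', hk'N, hqtop, hqlow⟩ := dead_classify hN q hdead hq1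
    have ht1 : SC N (N - k) q.1 q.2 := (hinv.2 (N - k) hsk hmu hmv).mp hs1
    rw [hqtop, hqlow] at ht1
    have hkk' : k ≤ k' := (SC_profile hkN hk'N).mp ht1
    have ht2 : ¬ SC N (N - (k + 2)) q.1 q.2 := fun hc =>
      hs2 ((hinv.2 (N - (k + 2)) hsk2 hmu hmv).mpr hc)
    have hk'k : ¬ (k + 2 ≤ k') := by
      intro hc
      apply ht2
      rw [hqtop, hqlow]
      exact (SC_profile hk2 hk'N).mpr hc
    have hq2par : mcnt N q.2 N % 2 = 0 := by
      have := hinv.1.2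
      rw [hpe2] at this
      omega
    have hq2val : mcnt N q.2 N = N - k' := by
      rw [hqlow, mcnt_lowSeq N k' N (le_refl N)]
      omega
    have hk'eq : k' = k := by
      have hpar2 : (N - k) % 2 = 0 := hsk
      omega
    have hqeq : q = (top N, lowSeq N k) := by
      rw [← hk'eq]
      exact Prod.ext hqtop hqlow
    rw [← hqeq]
    exact hconn

end CrystalPaper
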